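/- Let $0\to\mathcal{P}\hookrightarrow\mathcal{L}\xrightarrow{\pi}\mathcal{Q}\to 0$ be an abelian extension of 3-Lie superalgebras with $[\mathcal{P},\mathcal{P},\mathcal{L}]=0$, and let $(\mathcal{D}_p,\mathcal{D}_q)$ be an even compatible pair of superderivations. If the obstruction class $[Ob^{\Omega}_{(\mathcal{D}_p,\mathcal{D}_q)}]\in\mathbb{H}^1(\mathcal{Q};\mathcal{P})$ is trivial, say $Ob^{\Omega}_{(\mathcal{D}_p,\mathcal{D}_q)}=\delta_{\Phi}\mu$ for some even $\mu:\mathcal{Q}\to\mathcal{P}$, then the map $\mathcal{D}_l:\mathcal{L}\to\mathcal{L}$ defined (using the decomposition $\mathcal{L}=s(\mathcal{Q})\oplus\mathcal{P}$) by $\mathcal{D}_l(s(x)+v)=s(\mathcal{D}_q x)+\mu(x)+\mathcal{D}_p v$ is a superderivation of $\mathcal{L}$ extending $(\mathcal{D}_p,\mathcal{D}_q)$; hence $(\mathcal{D}_p,\mathcal{D}_q)$ is extensible if and only if its obstruction class vanishes. -/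
import Mathlib


/-! Common definitions: 3-Lie superalgebras, representations, cohomology operators. -/

def gsign (k : Type*) [Field k] (a : ZMod 2) : k := if a = 0 then 1 else -1

lemma zmod2_cases : ∀ a : ZMod 2, a = 0 ∨ a = 1 := by decide


lemma gsign_zero (k : Type*) [Field k] : gsign k 0 = 1 := rfl

lemma gsign_mul (k : Type*) [Field k] (a b : ZMod 2) :
    gsign k a * gsign k b = gsign k (a + b) := by
  rcases zmod2_cases a with h | h <;> rcases zmod2_cases b with h' | h' <;>
    subst h <;> subst h' <;> simp [gsign, (by decide : (1 : ZMod 2) + 1 = 0)]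

lemma grade_split {k G : Type*} [Field k] [AddCommGroup G] [Module k G]
    {gr : ZMod 2 → Submodule k G} (h : DirectSum.IsInternal gr) (v : G) :
    ∃ v0 ∈ gr 0, ∃ v1 ∈ gr 1, v = v0 + v1 := by
  have htop : gr 0 ⊔ gr 1 = ⊤ := by
    rw [← h.submodule_iSup_eq_top]
    refine le_antisymm (sup_le (le_iSup _ 0) (le_iSup _ 1)) (iSup_le fun a => ?_)
    rcases zmod2_cases a with h | h <;> subst h
    exacts [le_sup_left, le_sup_right]
  have hv : v ∈ gr 0 ⊔ gr 1 := htop ▸ Submodule.mem_top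
  obtain ⟨v0, h0, v1, h1, hv⟩ := Submodule.mem_sup.mp hv
  exact ⟨v0, h0, v1, h1, hv.symm⟩

lemma grade_disj {k G : Type*} [Field k] [AddCommGroup G] [Module k G]
    {gr : ZMod 2 → Submodule k G} (h : DirectSum.IsInternal gr) (w : G)
    (h0 : w ∈ gr 0) (h1 : w ∈ gr 1) : w = 0 := by
  have hd : Disjoint (gr 0) (gr 1) :=
    h.submodule_iSupIndep.pairwiseDisjoint (by decide : (0 : ZMod 2) ≠ 1)
  exact (Submodule.disjoint_def.mp hd) w h0 h1

/-- A 3-Lie superalgebra: a `ℤ₂`-graded vector space with a trilinear graded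
skew-symmetric bracket satisfying the graded fundamental (Filippov) identity. -/
structure TLSA (k G : Type*) [Field k] [AddCommGroup G] [Module k G] where
  br : G → G → G → G
  gr : ZMod 2 → Submodule k G
  decomp : DirectSum.IsInternal gr
  lin₁ : ∀ y z, IsLinearMap k fun x => br x y z
  lin₂ : ∀ x z, IsLinearMap k fun y => br x y z
  lin₃ : ∀ x y, IsLinearMap k fun z => br x y z
  grade : ∀ (a b c : ZMod 2) (x y z : G), x ∈ gr a → y ∈ gr b → z ∈ gr c →
    br x y z ∈ gr (a + b + c)
  skew₁ : ∀ (a b : ZMod 2) (x y z : G), x ∈ gr a → y ∈ gr b →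
    br x y z = - gsign k (a * b) • br y x z
  skew₂ : ∀ (b c : ZMod 2) (x y z : G), y ∈ gr b → z ∈ gr c →
    br x y z = - gsign k (b * c) • br x z y
  fund : ∀ (a b c d e : ZMod 2) (x1 x2 x3 x4 x5 : G),
    x1 ∈ gr a → x2 ∈ gr b → x3 ∈ gr c → x4 ∈ gr d → x5 ∈ gr e →
    br x1 x2 (br x3 x4 x5) =
      br (br x1 x2 x3) x4 x5 + gsign k (c * (a + b)) • br x3 (br x1 x2 x4) x5
        + gsign k ((a + b) * (c + d)) • br x3 x4 (br x1 x2 x5)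

section Defs
variable {k G P : Type*} [Field k] [AddCommGroup G] [Module k G] [AddCommGroup P] [Module k P]

/-- Trilinearity of a map of three variables. -/
def Trilin3 (k : Type*) [Field k] {G P : Type*} [AddCommGroup G] [Module k G]
    [AddCommGroup P] [Module k P] (f : G → G → G → P) : Prop :=
  (∀ y z, IsLinearMap k fun x => f x y z) ∧ (∀ x z, IsLinearMap k fun y => f x y z) ∧
    ∀ x y, IsLinearMap k (f x y)

/-- A representation of the 3-Lie superalgebra `T` on the graded space `(P, Pgr)`. -/
def IsTLSARep (T : TLSA k G) (Pgr : ZMod 2 → Submodule k P) (Φ : G → G → P → P) : Prop :=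
  (∀ y v, IsLinearMap k fun x => Φ x y v) ∧
  (∀ x v, IsLinearMap k fun y => Φ x y v) ∧
  (∀ x y, IsLinearMap k (Φ x y)) ∧
  (∀ (a b c : ZMod 2) x y v, x ∈ T.gr a → y ∈ T.gr b → v ∈ Pgr c → Φ x y v ∈ Pgr (a + b + c)) ∧
  (∀ (a b : ZMod 2) x y, x ∈ T.gr a → y ∈ T.gr b → ∀ v, Φ x y v = - gsign k (a * b) • Φ y x v) ∧
  (∀ (a b c d : ZMod 2) x1 x2 x3 x4, x1 ∈ T.gr a → x2 ∈ T.gr b → x3 ∈ T.gr c → x4 ∈ T.gr d → ∀ v,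
    Φ x1 x2 (Φ x3 x4 v) = Φ (T.br x1 x2 x3) x4 v + gsign k (c * (a + b)) • Φ x3 (T.br x1 x2 x4) v
      + gsign k ((a + b) * (c + d)) • Φ x3 x4 (Φ x1 x2 v)) ∧
  (∀ (a b c d : ZMod 2) x1 x2 x3 x4, x1 ∈ T.gr a → x2 ∈ T.gr b → x3 ∈ T.gr c → x4 ∈ T.gr d → ∀ v,
    Φ x1 (T.br x2 x3 x4) v = gsign k ((a + b) * (c + d)) • Φ x3 x4 (Φ x1 x2 v)
      - gsign k (a * (b + d) + c * d) • Φ x2 x4 (Φ x1 x3 v)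
      + gsign k (a * (b + c)) • Φ x2 x3 (Φ x1 x4 v))

/-- The 3-cochain `Om` is even (grading-preserving). -/
def Even3 (T : TLSA k G) (Pgr : ZMod 2 → Submodule k P) (Om : G → G → G → P) : Prop :=
  ∀ (a b c : ZMod 2) x y z, x ∈ T.gr a → y ∈ T.gr b → z ∈ T.gr c → Om x y z ∈ Pgr (a + b + c)

/-- The 2-cocycle condition `δ_Φ Om = 0` for 3-Lie superalgebra cohomology. -/
def IsCocycle2 (T : TLSA k G) (Φ : G → G → P → P) (Om : G → G → G → P) : Prop :=
  ∀ (a b c d e : ZMod 2) x1 x2 x3 x4 x5,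
    x1 ∈ T.gr a → x2 ∈ T.gr b → x3 ∈ T.gr c → x4 ∈ T.gr d → x5 ∈ T.gr e →
    Om (T.br x1 x2 x3) x4 x5 + gsign k (c * (a + b)) • Om x3 (T.br x1 x2 x4) x5
      + gsign k ((a + b) * (c + d)) • Om x3 x4 (T.br x1 x2 x5) - Om x1 x2 (T.br x3 x4 x5)
    = Φ x1 x2 (Om x3 x4 x5) - gsign k ((a + b) * (c + d)) • Φ x3 x4 (Om x1 x2 x5)
      - gsign k ((d + e) * (a + b + c)) • Φ x4 x5 (Om x1 x2 x3)
      - gsign k ((c + e) * (a + b) + e * (c + d)) • Φ x5 x3 (Om x1 x2 x4)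

/-- `Om = δ_Φ μ` where `μ` is a 1-cochain of degree `μdeg`. -/
def IsDelta1 (T : TLSA k G) (Φ : G → G → P → P) (μdeg : ZMod 2) (μ : G → P)
    (Om : G → G → G → P) : Prop :=
  ∀ (a b c : ZMod 2) x y z, x ∈ T.gr a → y ∈ T.gr b → z ∈ T.gr c →
    Om x y z = - μ (T.br x y z) + gsign k (μdeg * (a + b)) • Φ x y (μ z)
      + gsign k ((μdeg + a) * (b + c)) • Φ y z (μ x)
      + gsign k (μdeg * (a + c) + c * (a + b)) • Φ z x (μ y)

/-- A superderivation of degree `α` of the 3-Lie superalgebra `T`. -/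
def IsSDer (T : TLSA k G) (α : ZMod 2) (D : G →ₗ[k] G) : Prop :=
  (∀ (a : ZMod 2) x, x ∈ T.gr a → D x ∈ T.gr (a + α)) ∧
  ∀ (a b c : ZMod 2) x y z, x ∈ T.gr a → y ∈ T.gr b → z ∈ T.gr c →
    D (T.br x y z) = T.br (D x) y z + gsign k (α * a) • T.br x (D y) z
      + gsign k (α * (a + b)) • T.br x y (D z)

/-- Compatibility of a pair `(Dp, Dq)` of degree `α` with the representation `Φ`. -/
def Compatible (T : TLSA k G) (Pgr : ZMod 2 → Submodule k P) (Φ : G → G → P → P)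
    (α : ZMod 2) (Dp : P →ₗ[k] P) (Dq : G →ₗ[k] G) : Prop :=
  ∀ (a b : ZMod 2) x y, x ∈ T.gr a → y ∈ T.gr b → ∀ v,
    Dp (Φ x y v) - gsign k (α * (a + b)) • Φ x y (Dp v)
      = Φ (Dq x) y v + gsign k (α * a) • Φ x (Dq y) v

/-- `Ob = Ob^{Om}_{(Dp,Dq)}`, the obstruction 2-cochain. -/
def IsOb (T : TLSA k G) (α : ZMod 2) (Dp : P →ₗ[k] P) (Dq : G →ₗ[k] G)
    (Om Ob : G → G → G → P) : Prop :=
  ∀ (a b c : ZMod 2) x y z, x ∈ T.gr a → y ∈ T.gr b → z ∈ T.gr c →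
    Ob x y z = Dp (Om x y z) - Om (Dq x) y z - gsign k (α * a) • Om x (Dq y) z
      - gsign k (α * (a + b)) • Om x y (Dq z)

end Defs

/-- A homomorphism of 3-Lie superalgebras: even linear and bracket-preserving. -/
def IsTLSAHom {k G1 G2 : Type*} [Field k] [AddCommGroup G1] [Module k G1]
    [AddCommGroup G2] [Module k G2] (T1 : TLSA k G1) (T2 : TLSA k G2) (f : G1 → G2) : Prop :=
  IsLinearMap k f ∧ (∀ (a : ZMod 2) x, x ∈ T1.gr a → f x ∈ T2.gr a) ∧
    ∀ x y z, f (T1.br x y z) = T2.br (f x) (f y) (f z)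

/-- An abelian extension `0 → P → L → Q → 0` of 3-Lie superalgebras with `[P,P,L] = 0`. -/
structure AbExt {k Pm Lm Qm : Type*} [Field k] [AddCommGroup Pm] [Module k Pm]
    [AddCommGroup Lm] [Module k Lm] [AddCommGroup Qm] [Module k Qm]
    (TP : TLSA k Pm) (TL : TLSA k Lm) (TQ : TLSA k Qm) where
  i : Pm →ₗ[k] Lm
  pr : Lm →ₗ[k] Qm
  i_inj : Function.Injective i
  pr_surj : Function.Surjective pr
  exact : LinearMap.range i = LinearMap.ker pr
  i_hom : IsTLSAHom TP TL i
  pr_hom : IsTLSAHom TL TQ pr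
  abelian : ∀ u v l, TL.br (i u) (i v) l = 0

/-- An even linear section of the projection of an abelian extension. -/
def IsSection {k Pm Lm Qm : Type*} [Field k] [AddCommGroup Pm] [Module k Pm]
    [AddCommGroup Lm] [Module k Lm] [AddCommGroup Qm] [Module k Qm]
    {TP : TLSA k Pm} {TL : TLSA k Lm} {TQ : TLSA k Qm}
    (E : AbExt TP TL TQ) (s : Qm →ₗ[k] Lm) : Prop :=
  (∀ x, E.pr (s x) = x) ∧ ∀ (a : ZMod 2) x, x ∈ TQ.gr a → s x ∈ TL.gr a

variable {k Pm Lm Qm G : Type*} [Field k] [AddCommGroup Pm] [Module k Pm]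
  [AddCommGroup Lm] [Module k Lm] [AddCommGroup Qm] [Module k Qm]
  [AddCommGroup G] [Module k G]

/-- if the obstruction class of an even compatible pair `(Dp, Dq)`
is trivial, `Ob^Ω_{(Dp,Dq)} = δ_Φ μ`, then `Dl(s(x)+v) = s(Dq x) + μ(x) + Dp(v)`
is a superderivation of `L` extending the pair; hence extensibility is equivalent
to vanishing of the obstruction class. -/
theorem obstruction_trivial_implies_extensible
    {TP : TLSA k Pm} {TL : TLSA k Lm} {TQ : TLSA k Qm}
    (E : AbExt TP TL TQ) (s : Qm →ₗ[k] Lm) (hs : IsSection E s)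
    (Φ : Qm → Qm → Pm → Pm)
    (hΦ : ∀ x y v, E.i (Φ x y v) = TL.br (s x) (s y) (E.i v))
    (Om : Qm → Qm → Qm → Pm)
    (hOm : ∀ x y z, E.i (Om x y z) = TL.br (s x) (s y) (s z) - s (TQ.br x y z))
    (Dp : Pm →ₗ[k] Pm) (hDp : IsSDer TP 0 Dp)
    (Dq : Qm →ₗ[k] Qm) (hDq : IsSDer TQ 0 Dq)
    (hcomp : Compatible TQ TP.gr Φ 0 Dp Dq)
    (Ob : Qm → Qm → Qm → Pm) (hOb : IsOb TQ 0 Dp Dq Om Ob)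
    (μ : Qm →ₗ[k] Pm) (hμe : ∀ (a : ZMod 2) x, x ∈ TQ.gr a → μ x ∈ TP.gr a)
    (hδ : IsDelta1 TQ Φ 0 μ Ob)
    (Dl : Lm →ₗ[k] Lm)
    (hDl : ∀ x v, Dl (s x + E.i v) = s (Dq x) + E.i (μ x) + E.i (Dp v)) :
    IsSDer TL 0 Dl ∧ (∀ v, Dl (E.i v) = E.i (Dp v)) ∧
      ∀ l, E.pr (Dl l) = Dq (E.pr l) := by
  obtain ⟨hsπ, hsg⟩ := hs
  have hig : ∀ (a : ZMod 2) v, v ∈ TP.gr a → E.i v ∈ TL.gr a := E.i_hom.2.1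
  have hprg : ∀ (a : ZMod 2) l, l ∈ TL.gr a → E.pr l ∈ TQ.gr a := E.pr_hom.2.1
  have hpri : ∀ v, E.pr (E.i v) = 0 := fun v => by
    have h : E.i v ∈ LinearMap.ker E.pr := E.exact ▸ LinearMap.mem_range_self E.i v
    exact h
  have hDli : ∀ v, Dl (E.i v) = E.i (Dp v) := fun v => by
    have h := hDl 0 v
    simpa using h
  have hDlsv : ∀ x v, Dl (s x + E.i v) = s (Dq x) + E.i (μ x + Dp v) := fun x v => by
    rw [hDl, map_add]; abel
  have hdec : ∀ (a : ZMod 2) (l : Lm), l ∈ TL.gr a →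
      ∃ q v, q ∈ TQ.gr a ∧ v ∈ TP.gr a ∧ l = s q + E.i v := by
    intro a l hl
    obtain ⟨v, hv⟩ : ∃ v, E.i v = l - s (E.pr l) := by
      have h : l - s (E.pr l) ∈ LinearMap.ker E.pr := by
        simp [LinearMap.mem_ker, map_sub, hsπ]
      rw [← E.exact] at h
      exact h
    have hq : E.pr l ∈ TQ.gr a := hprg a l hl
    have hivm : E.i v ∈ TL.gr a := hv ▸ sub_mem hl (hsg a _ hq)
    obtain ⟨v0, h0, v1, h1, hsplit⟩ := grade_split TP.decomp v
    have key : v ∈ TP.gr a := by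
      rcases zmod2_cases a with rfl | rfl
      · have hz : E.i v1 = 0 := grade_disj TL.decomp _
          (by
            have he : E.i v1 = E.i v - E.i v0 := by rw [hsplit, map_add]; abel
            rw [he]; exact sub_mem hivm (hig 0 v0 h0))
          (hig 1 v1 h1)
        have hv1 : v1 = 0 := E.i_inj (by rw [hz, map_zero])
        rw [hsplit, hv1, add_zero]; exact h0
      · have hz : E.i v0 = 0 := grade_disj TL.decomp _
          (hig 0 v0 h0)
          (by
            have he : E.i v0 = E.i v - E.i v1 := by rw [hsplit, map_add]; abel
            rw [he]; exact sub_mem hivm (hig 1 v1 h1))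
        have hv0 : v0 = 0 := E.i_inj (by rw [hz, map_zero])
        rw [hsplit, hv0, zero_add]; exact h1
    exact ⟨E.pr l, v, hq, key, by rw [hv]; abel⟩
  have hΦadd : ∀ x y u v, Φ x y (u + v) = Φ x y u + Φ x y v := by
    intro x y u v
    apply E.i_inj
    rw [map_add, hΦ, hΦ, hΦ, map_add, (TL.lin₃ _ _).map_add]
  have hΦskew : ∀ (a b : ZMod 2) x y, x ∈ TQ.gr a → y ∈ TQ.gr b → ∀ w,
      Φ x y w = - gsign k (a * b) • Φ y x w := by
    intro a b x y hx hy w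
    apply E.i_inj
    rw [hΦ, map_smul, hΦ]
    exact TL.skew₁ a b _ _ _ (hsg a x hx) (hsg b y hy)
  have hz2 : ∀ (b c : ZMod 2) u (l : Lm) v, l ∈ TL.gr b → v ∈ TP.gr c →
      TL.br (E.i u) l (E.i v) = 0 := by
    intro b c u l v hl hv
    rw [TL.skew₂ b c _ _ _ hl (hig c v hv), E.abelian, smul_zero]
  have hz3 : ∀ (a b c : ZMod 2) (l : Lm) u v, l ∈ TL.gr a → u ∈ TP.gr b → v ∈ TP.gr c →
      TL.br l (E.i u) (E.i v) = 0 := by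
    intro a b c l u v hl hu hv
    rw [TL.skew₁ a b _ _ _ hl (hig b u hu), hz2 a c _ _ _ hl hv, smul_zero]
  have hbr : ∀ (a b c : ZMod 2) x u y v z w, x ∈ TQ.gr a → u ∈ TP.gr a →
      y ∈ TQ.gr b → v ∈ TP.gr b → z ∈ TQ.gr c → w ∈ TP.gr c →
      TL.br (s x + E.i u) (s y + E.i v) (s z + E.i w) =
        s (TQ.br x y z) + E.i (Om x y z + gsign k (a * (b + c)) • Φ y z u
          - gsign k (b * c) • Φ x z v + Φ x y w) := by
    intro a b c x u y v z w hx hu hy hv hz hw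
    have e1 : TL.br (s x + E.i u) (s y + E.i v) (s z + E.i w) =
        TL.br (s x) (s y) (s z) + TL.br (s x) (s y) (E.i w)
        + TL.br (s x) (E.i v) (s z) + TL.br (s x) (E.i v) (E.i w)
        + TL.br (E.i u) (s y) (s z) + TL.br (E.i u) (s y) (E.i w)
        + TL.br (E.i u) (E.i v) (s z) + TL.br (E.i u) (E.i v) (E.i w) := by
      rw [(TL.lin₁ _ _).map_add, (TL.lin₂ _ _).map_add, (TL.lin₂ _ _).map_add,
        (TL.lin₃ _ _).map_add, (TL.lin₃ _ _).map_add, (TL.lin₃ _ _).map_add,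
        (TL.lin₃ _ _).map_add]
      abel
    rw [e1, hz3 a b c _ _ _ (hsg a x hx) hv hw, hz2 b c _ _ _ (hsg b y hy) hw,
      E.abelian, E.abelian]
    have t1 : TL.br (s x) (s y) (s z) = s (TQ.br x y z) + E.i (Om x y z) := by
      rw [hOm]; abel
    have t2 : TL.br (s x) (s y) (E.i w) = E.i (Φ x y w) := (hΦ x y w).symm
    have t3 : TL.br (s x) (E.i v) (s z) = - gsign k (b * c) • E.i (Φ x z v) := by
      rw [TL.skew₂ b c _ _ _ (hig b v hv) (hsg c z hz), hΦ]
    have t5 : TL.br (E.i u) (s y) (s z) = gsign k (a * (b + c)) • E.i (Φ y z u) := by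
      rw [TL.skew₁ a b _ _ _ (hig a u hu) (hsg b y hy),
        TL.skew₂ a c _ _ _ (hig a u hu) (hsg c z hz), hΦ, smul_smul, neg_mul_neg,
        gsign_mul, ← mul_add]
    rw [t1, t2, t3, t5]
    simp only [map_add, map_sub, map_smul]
    module
  refine ⟨⟨?_, ?_⟩, hDli, ?_⟩
  · -- grading
    intro a x hx
    obtain ⟨q, v, hq, hv, rfl⟩ := hdec a x hx
    have h1 : Dq q ∈ TQ.gr a := by simpa using hDq.1 a q hq
    have h2 : Dp v ∈ TP.gr a := by simpa using hDp.1 a v hv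
    rw [hDlsv]
    simp only [add_zero]
    exact add_mem (hsg a _ h1) (hig a _ (add_mem (hμe a q hq) h2))
  · -- derivation identity
    intro a b c x y z hx hy hz
    obtain ⟨q1, v1, hq1, hv1, rfl⟩ := hdec a x hx
    obtain ⟨q2, v2, hq2, hv2, rfl⟩ := hdec b y hy
    obtain ⟨q3, v3, hq3, hv3, rfl⟩ := hdec c z hz
    simp only [zero_mul, gsign_zero, one_smul]
    have hDq1 : Dq q1 ∈ TQ.gr a := by simpa using hDq.1 a q1 hq1
    have hDq2 : Dq q2 ∈ TQ.gr b := by simpa using hDq.1 b q2 hq2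
    have hDq3 : Dq q3 ∈ TQ.gr c := by simpa using hDq.1 c q3 hq3
    have hm1 : μ q1 + Dp v1 ∈ TP.gr a :=
      add_mem (hμe a q1 hq1) (by simpa using hDp.1 a v1 hv1)
    have hm2 : μ q2 + Dp v2 ∈ TP.gr b :=
      add_mem (hμe b q2 hq2) (by simpa using hDp.1 b v2 hv2)
    have hm3 : μ q3 + Dp v3 ∈ TP.gr c :=
      add_mem (hμe c q3 hq3) (by simpa using hDp.1 c v3 hv3)
    have hs_eq : Dq (TQ.br q1 q2 q3) =
        TQ.br (Dq q1) q2 q3 + TQ.br q1 (Dq q2) q3 + TQ.br q1 q2 (Dq q3) := by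
      simpa only [zero_mul, gsign_zero, one_smul] using hDq.2 a b c q1 q2 q3 hq1 hq2 hq3
    have hob' : Dp (Om q1 q2 q3) = Ob q1 q2 q3 + Om (Dq q1) q2 q3
        + Om q1 (Dq q2) q3 + Om q1 q2 (Dq q3) := by
      have h := hOb a b c q1 q2 q3 hq1 hq2 hq3
      simp only [zero_mul, gsign_zero, one_smul] at h
      rw [h]; abel
    have hdel' : Ob q1 q2 q3 = -μ (TQ.br q1 q2 q3) + Φ q1 q2 (μ q3)
        + gsign k (a * (b + c)) • Φ q2 q3 (μ q1)
        + gsign k (c * (a + b)) • Φ q3 q1 (μ q2) := by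
      have h := hδ a b c q1 q2 q3 hq1 hq2 hq3
      simpa only [zero_mul, zero_add, gsign_zero, one_smul] using h
    have hc1 : Dp (Φ q2 q3 v1) = Φ q2 q3 (Dp v1) + Φ (Dq q2) q3 v1 + Φ q2 (Dq q3) v1 := by
      have h := hcomp b c q2 q3 hq2 hq3 v1
      simp only [zero_mul, gsign_zero, one_smul] at h
      rw [sub_eq_iff_eq_add] at h
      rw [h]; abel
    have hc2 : Dp (Φ q1 q3 v2) = Φ q1 q3 (Dp v2) + Φ (Dq q1) q3 v2 + Φ q1 (Dq q3) v2 := by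
      have h := hcomp a c q1 q3 hq1 hq3 v2
      simp only [zero_mul, gsign_zero, one_smul] at h
      rw [sub_eq_iff_eq_add] at h
      rw [h]; abel
    have hc3 : Dp (Φ q1 q2 v3) = Φ q1 q2 (Dp v3) + Φ (Dq q1) q2 v3 + Φ q1 (Dq q2) v3 := by
      have h := hcomp a b q1 q2 hq1 hq2 v3
      simp only [zero_mul, gsign_zero, one_smul] at h
      rw [sub_eq_iff_eq_add] at h
      rw [h]; abel
    have hskew2 : gsign k (c * (a + b)) • Φ q3 q1 (μ q2)
        = - gsign k (b * c) • Φ q1 q3 (μ q2) := by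
      rw [hΦskew c a q3 q1 hq3 hq1 (μ q2), smul_smul]
      have harg : gsign k (c * (a + b)) * -gsign k (c * a) = -gsign k (b * c) := by
        rw [mul_neg, gsign_mul,
          (by decide : ∀ a b c : ZMod 2, c * (a + b) + c * a = b * c) a b c]
      rw [harg]
    rw [hbr a b c q1 v1 q2 v2 q3 v3 hq1 hv1 hq2 hv2 hq3 hv3]
    simp only [hDlsv]
    rw [hbr a b c (Dq q1) (μ q1 + Dp v1) q2 v2 q3 v3 hDq1 hm1 hq2 hv2 hq3 hv3,
      hbr a b c q1 v1 (Dq q2) (μ q2 + Dp v2) q3 v3 hq1 hv1 hDq2 hm2 hq3 hv3,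
      hbr a b c q1 v1 q2 v2 (Dq q3) (μ q3 + Dp v3) hq1 hv1 hq2 hv2 hDq3 hm3,
      hs_eq]
    simp only [map_add, map_sub, map_smul, map_neg]
    rw [hob', hdel', hc1, hc2, hc3, hΦadd q2 q3 (μ q1) (Dp v1),
      hΦadd q1 q3 (μ q2) (Dp v2), hΦadd q1 q2 (μ q3) (Dp v3), hskew2]
    simp only [map_add, map_sub, map_smul, map_neg]
    module
  · -- projection compatibility
    intro l
    obtain ⟨v, hv⟩ : ∃ v, E.i v = l - s (E.pr l) := by
      have h : l - s (E.pr l) ∈ LinearMap.ker E.pr := by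
        simp [LinearMap.mem_ker, map_sub, hsπ]
      rw [← E.exact] at h
      exact h
    have hl : l = s (E.pr l) + E.i v := by rw [hv]; abel
    conv_lhs => rw [hl, hDlsv]
    rw [map_add, hsπ, hpri, add_zero]
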